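/- (Blass) Let X be a set, K a type, and θ : X × 𝒫(X) → X ⊕ K an injection. For x ∈ X define T_x := { t : K | ∃ s ⊆ X, θ(x, s) = Sum.inr t }. Then the sets T_x are nonempty and pairwise disjoint: T_x ≠ ∅ for every x, and T_x ∩ T_y = ∅ whenever x ≠ y. -/

import Mathlib

universe u

/-- Cantor's theorem rules out `g s` being in the left summand for every `s`. -/
theorem exists_inr_of_injective_set {X K : Type*} {g : Set X → X ⊕ K}
    (hg : Function.Injective g) : ∃ s t, g s = Sum.inr t := by
  by_contra! hinr
  have hleft : ∀ s, (g s).isLeft := fun s => by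
    cases h : g s with
    | inl _ => rfl
    | inr t => exact absurd h (hinr s t)
  refine Function.cantor_injective (fun s => (g s).getLeft (hleft s)) fun s s' hss' => hg ?_
  rw [← Sum.inl_getLeft (g s) (hleft s), ← Sum.inl_getLeft (g s') (hleft s')]
  exact congrArg Sum.inl hss'

/-- (Blass) Given an injection `θ : X × 𝒫(X) → X ⊕ K`, the sets
`T x := {t : K | ∃ s : Set X, θ (x, s) = Sum.inr t}` are nonempty and pairwise
disjoint. -/
theorem blass_T_nonempty_pairwise_disjoint (X K : Type u)
    (θ : X × Set X → X ⊕ K) (hθ : Function.Injective θ) :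
    (∀ x : X, {t : K | ∃ s : Set X, θ (x, s) = Sum.inr t} ≠ ∅) ∧
    (∀ x y : X, x ≠ y →
      {t : K | ∃ s : Set X, θ (x, s) = Sum.inr t} ∩
        {t : K | ∃ s : Set X, θ (y, s) = Sum.inr t} = ∅) := by
  refine ⟨fun x => ?_, fun x y hxy => ?_⟩
  · obtain ⟨s, t, hst⟩ := exists_inr_of_injective_set (hθ.comp (Prod.mk_right_injective x))
    exact Set.nonempty_iff_ne_empty.mp ⟨t, s, hst⟩
  · refine Set.eq_empty_iff_forall_notMem.mpr fun t ⟨⟨s, hs⟩, ⟨s', hs'⟩⟩ => hxy ?_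
    exact congrArg Prod.fst (hθ (hs.trans hs'.symm))
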